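/- arXiv:1708.06437 — 3 statements merged into one kernel-verified Lean document; each statement's English description precedes it below -/
import Mathlib

section
/- Let R and S be independent exponentially distributed random variables with means m_R > 0 and m_S > 0. Then E[ ln(1 + R·S/(S + 1)) ] ≥ ln( 1 + m_R·m_S·exp(−2γ)·exp( −exp(1/m_S)·∫_{1/m_S}^∞ (exp(−t)/t) dt ) ), where γ is the Euler–Mascheroni constant. (The inner exponent equals exp(1/m_S)·Ei(−1/m_S), where Ei is the exponential integral.) -/
/-!
With `X = log R + log S - log (1 + S)` the SNR `R S / (S + 1)` equals `exp X` almost surely, and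
`x ↦ log (1 + exp x)` is convex, so Jensen's inequality gives
`E[log (1 + R S / (S + 1))] ≥ log (1 + exp E[X])`. Here `E[X] = E[log R] + E[log S] - E[log (1 + S)]`,
with `E[log R] = log m_R - γ` because `∫₀^∞ e^{-t} log t dt = Γ'(1) = -γ`, and
`E[log (1 + S)] = e^{1/m_S} ∫_{1/m_S}^∞ e^{-t}/t dt` by an integration by parts.
-/

open MeasureTheory ProbabilityTheory Real Set Filter Topology

namespace Real

lemma integrableOn_exp_neg_mul_self : IntegrableOn (fun t => exp (-t) * t) (Ioi 0) := by
  refine (GammaIntegral_convergent two_pos).congr_fun (fun t _ => ?_) measurableSet_Ioi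
  norm_num

lemma integrableOn_exp_neg_div_self {x : ℝ} (hx : 0 < x) :
    IntegrableOn (fun t => exp (-t) / t) (Ioi x) := by
  refine ((integrableOn_exp_neg_Ioi x).mul_const x⁻¹).mono'
    (by fun_prop : Measurable fun t => exp (-t) / t).aestronglyMeasurable
    ((ae_restrict_iff' measurableSet_Ioi).2 (ae_of_all _ fun t (ht : x < t) => ?_))
  rw [norm_div, norm_of_nonneg (exp_pos _).le, norm_of_nonneg (hx.trans ht).le, div_eq_mul_inv]
  gcongr

lemma abs_log_le_rpow_add_self {t : ℝ} (ht : 0 < t) : |log t| ≤ 2 * t ^ (-(1 / 2) : ℝ) + t := by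
  rcases le_total 1 t with h | h
  · rw [abs_of_nonneg (log_nonneg h)]
    linarith [log_le_sub_one_of_pos ht, rpow_pos_of_pos ht (-(1 / 2) : ℝ)]
  · rw [abs_of_nonpos (log_nonpos ht.le h), ← log_inv]
    have := log_le_rpow_div (inv_nonneg.2 ht.le) (by norm_num : (0 : ℝ) < 1 / 2)
    rw [inv_rpow ht.le, ← rpow_neg ht.le] at this
    linarith

lemma integrableOn_exp_neg_mul_log : IntegrableOn (fun t => exp (-t) * log t) (Ioi 0) := by
  have hbound : IntegrableOn (fun t => 2 * (exp (-t) * t ^ ((1 / 2 : ℝ) - 1)) + exp (-t) * t)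
      (Ioi 0) :=
    ((GammaIntegral_convergent one_half_pos).const_mul 2).add integrableOn_exp_neg_mul_self
  refine hbound.mono' (by fun_prop) ((ae_restrict_iff' measurableSet_Ioi).2 ?_)
  filter_upwards with t ht
  rw [norm_mul, norm_of_nonneg (exp_pos _).le, norm_eq_abs]
  have := abs_log_le_rpow_add_self ht
  norm_num at this ⊢
  nlinarith [exp_pos (-t)]

lemma integral_exp_neg_mul_log : ∫ t in Ioi 0, exp (-t) * log t = -eulerMascheroniConstant := by
  have hΓ : Complex.Gamma =ᶠ[𝓝 1] Complex.GammaIntegral := by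
    filter_upwards [Complex.continuous_re.isOpen_preimage _ isOpen_Ioi |>.mem_nhds
      (by simp : (1 : ℂ) ∈ Complex.re ⁻¹' Ioi 0)] with s hs
    exact Complex.Gamma_eq_integral hs
  have h := (hΓ.hasDerivAt_iff.1 Complex.hasDerivAt_Gamma_one).unique
    (Complex.hasDerivAt_GammaIntegral (by simp))
  have hint : (∫ t : ℝ in Ioi 0, (t : ℂ) ^ ((1 : ℂ) - 1) * (log t * exp (-t)))
      = ((∫ t in Ioi 0, exp (-t) * log t : ℝ) : ℂ) := by
    rw [← integral_complex_ofReal]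
    refine integral_congr_ae (ae_of_all _ fun t => ?_)
    push_cast
    simp only [sub_self, Complex.cpow_zero]
    ring
  rw [hint] at h
  exact_mod_cast h.symm

lemma integral_comp_add_right_Ioi {E : Type*} [NormedAddCommGroup E] [NormedSpace ℝ E]
    (f : ℝ → E) (a c : ℝ) : ∫ x in Ioi a, f (x + c) = ∫ x in Ioi (a + c), f x := by
  simpa [preimage_add_const_Ioi] using
    (measurePreserving_add_right volume c).setIntegral_preimage_emb
      (measurableEmbedding_addRight c) f (Ioi (a + c))

lemma integral_exp_neg_mul_log_div_eq {r : ℝ} (hr : 0 < r) :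
    ∫ u in Ioi r, exp (-u) * log (u / r) = ∫ u in Ioi r, exp (-u) / u := by
  have hbound : ∀ u ∈ Ioi r, ‖log (u / r) * exp (-u)‖ ≤ r⁻¹ * (exp (-u) * u) := fun u hu => by
    have hur : 1 ≤ u / r := (one_le_div hr).2 (le_of_lt hu)
    rw [norm_of_nonneg (mul_nonneg (log_nonneg hur) (exp_pos _).le)]
    calc log (u / r) * exp (-u) ≤ (u / r) * exp (-u) := by
          gcongr; linarith [log_le_sub_one_of_pos (by linarith : 0 < u / r)]
      _ = r⁻¹ * (exp (-u) * u) := by ring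
  have hu (u) (hu : u ∈ Ioi r) : HasDerivAt (fun x => log (x / r)) u⁻¹ u := by
    have hu0 : u ≠ 0 := (hr.trans hu).ne'
    convert ((hasDerivAt_id' u).div_const r).log (div_ne_zero hu0 hr.ne') using 1
    field_simp
  have hv (u) (_ : u ∈ Ioi r) : HasDerivAt (fun x => -exp (-x)) (exp (-u)) u := by
    simpa using hasDerivAt_neg_exp_mul_exp (r := 1) (x := u)
  -- integrate by parts against `-exp (-u)`; the boundary term vanishes since `log (r / r) = 0`
  have hibp := integral_Ioi_mul_deriv_eq_deriv_mul hu hv (a' := 0) (b' := 0)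
    ((integrableOn_exp_neg_mul_self.mono_set (Ioi_subset_Ioi hr.le)).const_mul r⁻¹ |>.mono'
      (by fun_prop) ((ae_restrict_iff' measurableSet_Ioi).2 (ae_of_all _ hbound)))
    ((integrableOn_exp_neg_div_self hr).neg.congr_fun (fun u _ => by simp [div_eq_inv_mul])
      measurableSet_Ioi)
    ?_ ?_
  · calc ∫ u in Ioi r, exp (-u) * log (u / r) = ∫ u in Ioi r, log (u / r) * exp (-u) := by
          simp_rw [mul_comm]
      _ = ∫ u in Ioi r, -(u⁻¹ * -exp (-u)) := by rw [hibp, integral_neg]; ring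
      _ = ∫ u in Ioi r, exp (-u) / u := by simp [div_eq_inv_mul]
  · have hcont : ContinuousAt ((fun x => log (x / r)) * fun x => -exp (-x)) r :=
      ((continuousAt_id.div_const r).log (by simp [hr.ne'])).mul (by fun_prop)
    convert hcont.tendsto.mono_left nhdsWithin_le_nhds
    simp [hr.ne']
  · refine squeeze_zero_norm' ?_ (by simpa using
      (tendsto_pow_mul_exp_neg_atTop_nhds_zero 1).const_mul r⁻¹)
    filter_upwards [eventually_gt_atTop r] with u hu
    simpa [mul_comm (exp (-u))] using hbound u hu

lemma hasDerivAt_log_one_add_exp (x : ℝ) :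
    HasDerivAt (fun x => log (1 + exp x)) (exp x / (1 + exp x)) x :=
  ((hasDerivAt_exp x).const_add 1).log (by positivity)

lemma convexOn_log_one_add_exp : ConvexOn ℝ univ fun x => log (1 + exp x) := by
  refine Monotone.convexOn_univ_of_deriv
    (fun x => (hasDerivAt_log_one_add_exp x).differentiableAt) ?_
  rw [funext fun x => (hasDerivAt_log_one_add_exp x).deriv]
  intro a b hab
  rw [div_le_div_iff₀ (by positivity) (by positivity)]
  nlinarith [exp_le_exp.2 hab]

lemma log_one_add_exp_le (x : ℝ) : log (1 + exp x) ≤ log 2 + |x| := by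
  have h : 1 + exp x ≤ 2 * exp |x| := by
    linarith [exp_le_exp.2 (le_abs_self x), one_le_exp (abs_nonneg x)]
  calc log (1 + exp x) ≤ log (2 * exp |x|) := log_le_log (by positivity) h
    _ = log 2 + |x| := by rw [log_mul two_ne_zero (exp_pos _).ne', log_exp]

lemma log_one_add_exp_integral_le {Ω : Type*} [MeasurableSpace Ω] {μ : Measure Ω}
    [IsProbabilityMeasure μ] {X : Ω → ℝ} (hX : Integrable X μ) :
    log (1 + exp (∫ ω, X ω ∂μ)) ≤ ∫ ω, log (1 + exp (X ω)) ∂μ := by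
  have hcont : Continuous fun x => log (1 + exp x) :=
    (continuous_const.add continuous_exp).log fun x => (by positivity : 0 < 1 + exp x).ne'
  refine convexOn_log_one_add_exp.map_integral_le hcont.continuousOn isClosed_univ
    (ae_of_all _ fun _ => mem_univ _) hX ?_
  refine ((integrable_const (log 2)).add hX.abs).mono' (hcont.comp_aestronglyMeasurable hX.1)
    (ae_of_all _ fun ω => ?_)
  rw [Function.comp_apply, norm_of_nonneg (log_nonneg (by linarith [exp_pos (X ω)]))]
  exact log_one_add_exp_le _

end Real

namespace ProbabilityTheory

lemma expMeasure_eq_withDensity (r : ℝ) :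
    expMeasure r = (volume.restrict (Ioi 0)).withDensity
      fun x => ENNReal.ofReal (r * exp (-(r * x))) := by
  have hpdf : gammaPDF 1 r = (Ici 0).indicator fun x => ENNReal.ofReal (r * exp (-(r * x))) := by
    ext x
    by_cases hx : 0 ≤ x <;> simp [gammaPDF_eq, hx]
  rw [expMeasure, gammaMeasure, hpdf, withDensity_indicator measurableSet_Ici,
    Measure.restrict_congr_set Ioi_ae_eq_Ici.symm]

lemma ae_pos_expMeasure (r : ℝ) : ∀ᵐ x ∂expMeasure r, 0 < x := by
  rw [expMeasure_eq_withDensity]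
  exact (withDensity_absolutelyContinuous _ _).ae_le (ae_restrict_mem measurableSet_Ioi)

variable {r : ℝ}

lemma integral_expMeasure (hr : 0 < r) (g : ℝ → ℝ) :
    ∫ x, g x ∂expMeasure r = ∫ t in Ioi 0, exp (-t) * g (t / r) := by
  rw [expMeasure_eq_withDensity, integral_withDensity_eq_integral_toReal_smul (by fun_prop)
    (ae_of_all _ fun _ => ENNReal.ofReal_lt_top)]
  have := integral_comp_mul_left_Ioi (fun t => exp (-t) * g (t / r)) 0 hr
  simp only [mul_zero, mul_div_cancel_left₀ _ hr.ne', smul_eq_mul] at this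
  simp only [smul_eq_mul, ENNReal.toReal_ofReal (mul_pos hr (exp_pos _)).le, mul_assoc,
    integral_const_mul, this, mul_inv_cancel_left₀ hr.ne']

lemma integrable_expMeasure_iff (hr : 0 < r) {g : ℝ → ℝ} :
    Integrable g (expMeasure r) ↔ IntegrableOn (fun t => exp (-t) * g (t / r)) (Ioi 0) := by
  rw [expMeasure_eq_withDensity, integrable_withDensity_iff_integrable_smul' (by fun_prop)
    (ae_of_all _ fun _ => ENNReal.ofReal_lt_top)]
  have := integrableOn_Ioi_comp_mul_left_iff (fun t => exp (-t) * g (t / r)) 0 hr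
  simp only [mul_zero, mul_div_cancel_left₀ _ hr.ne'] at this
  simp only [smul_eq_mul, ENNReal.toReal_ofReal (mul_pos hr (exp_pos _)).le, mul_assoc]
  rw [integrable_const_mul_iff (isUnit_iff_ne_zero.2 hr.ne')]
  exact this

lemma integrable_log_expMeasure (hr : 0 < r) : Integrable log (expMeasure r) := by
  rw [integrable_expMeasure_iff hr]
  refine (integrableOn_exp_neg_mul_log.sub ((integrableOn_exp_neg_Ioi 0).mul_const (log r)))
    |>.congr_fun (fun t (ht : 0 < t) => ?_) measurableSet_Ioi
  simp only [Pi.sub_apply, log_div ht.ne' hr.ne']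
  ring

lemma integral_log_expMeasure (hr : 0 < r) :
    ∫ x, log x ∂expMeasure r = -log r - eulerMascheroniConstant := by
  rw [integral_expMeasure hr, setIntegral_congr_fun measurableSet_Ioi
      (g := fun t => exp (-t) * log t - exp (-t) * log r) fun t (ht : 0 < t) => by
        simp only [log_div ht.ne' hr.ne']; ring,
    integral_sub integrableOn_exp_neg_mul_log ((integrableOn_exp_neg_Ioi 0).mul_const _),
    integral_mul_const, integral_exp_neg_mul_log, integral_exp_neg_Ioi_zero]
  ring

lemma integrable_log_one_add_expMeasure (hr : 0 < r) :
    Integrable (fun x => log (1 + x)) (expMeasure r) := by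
  rw [integrable_expMeasure_iff hr]
  refine (integrableOn_exp_neg_mul_self.const_mul r⁻¹).mono' (by fun_prop)
    ((ae_restrict_iff' measurableSet_Ioi).2 (ae_of_all _ fun t (ht : 0 < t) => ?_))
  have hlog : 0 ≤ log (1 + t / r) := log_nonneg (by linarith [div_pos ht hr])
  rw [norm_of_nonneg (by positivity)]
  calc exp (-t) * log (1 + t / r) ≤ exp (-t) * (t / r) := by
        gcongr; linarith [log_le_sub_one_of_pos (by positivity : 0 < 1 + t / r)]
    _ = r⁻¹ * (exp (-t) * t) := by ring

lemma integral_log_one_add_expMeasure (hr : 0 < r) :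
    ∫ x, log (1 + x) ∂expMeasure r = exp r * ∫ t in Ioi r, exp (-t) / t := by
  calc ∫ x, log (1 + x) ∂expMeasure r
      = ∫ t in Ioi 0, exp r * (exp (-(t + r)) * log ((t + r) / r)) := by
        rw [integral_expMeasure hr]
        refine setIntegral_congr_fun measurableSet_Ioi fun t _ => ?_
        rw [add_div, div_self hr.ne', add_comm (t / r), ← mul_assoc, ← exp_add]
        ring_nf
    _ = exp r * ∫ u in Ioi r, exp (-u) * log (u / r) := by
        rw [integral_const_mul, integral_comp_add_right_Ioi (fun u => exp (-u) * log (u / r)),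
          zero_add]
    _ = exp r * ∫ t in Ioi r, exp (-t) / t := by rw [integral_exp_neg_mul_log_div_eq hr]

variable {Ω : Type*} [MeasurableSpace Ω] {P : Measure Ω}

lemma HasLaw.of_map_eq {𝓧 : Type*} [MeasurableSpace 𝓧] {μ : Measure 𝓧} {Y : Ω → 𝓧}
    (h : P.map Y = μ) (hμ : μ ≠ 0) : HasLaw Y μ P :=
  ⟨.of_map_ne_zero (h ▸ hμ), h⟩

lemma HasLaw.integrable_comp {𝓧 E : Type*} [MeasurableSpace 𝓧] [NormedAddCommGroup E]
    {μ : Measure 𝓧} {Y : Ω → 𝓧} (hY : HasLaw Y μ P) {f : 𝓧 → E} (hf : Integrable f μ) :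
    Integrable (fun ω => f (Y ω)) P :=
  (hY.map_eq ▸ hf).comp_aemeasurable hY.aemeasurable

section LogSNR

variable {R S : Ω → ℝ} {a b : ℝ}

lemma integrable_log_add_log_sub_log_one_add (ha : 0 < a) (hb : 0 < b)
    (hR : HasLaw R (expMeasure a) P) (hS : HasLaw S (expMeasure b) P) :
    Integrable (fun ω => log (R ω) + log (S ω) - log (1 + S ω)) P :=
  ((hR.integrable_comp (integrable_log_expMeasure ha)).add
    (hS.integrable_comp (integrable_log_expMeasure hb))).sub
    (hS.integrable_comp (integrable_log_one_add_expMeasure hb))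

lemma integral_log_add_log_sub_log_one_add (ha : 0 < a) (hb : 0 < b)
    (hR : HasLaw R (expMeasure a) P) (hS : HasLaw S (expMeasure b) P) :
    ∫ ω, (log (R ω) + log (S ω) - log (1 + S ω)) ∂P
      = -log a - log b - 2 * eulerMascheroniConstant - exp b * ∫ t in Ioi b, exp (-t) / t := by
  have hlogR := hR.integrable_comp (integrable_log_expMeasure ha)
  have hlogS := hS.integrable_comp (integrable_log_expMeasure hb)
  rw [integral_sub (f := fun ω => log (R ω) + log (S ω)) (hlogR.add hlogS)
      (hS.integrable_comp (integrable_log_one_add_expMeasure hb)),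
    integral_add hlogR hlogS,
    show ∫ ω, log (R ω) ∂P = _ from hR.integral_comp (integrable_log_expMeasure ha).1,
    show ∫ ω, log (S ω) ∂P = _ from hS.integral_comp (integrable_log_expMeasure hb).1,
    show ∫ ω, log (1 + S ω) ∂P = _ from hS.integral_comp (integrable_log_one_add_expMeasure hb).1,
    integral_log_expMeasure ha, integral_log_expMeasure hb, integral_log_one_add_expMeasure hb]
  ring

end LogSNR

end ProbabilityTheory

theorem lower_bound_I1_without_jamming_general
    {Ω : Type*} [MeasurableSpace Ω] (μ : Measure Ω) [IsProbabilityMeasure μ]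
    (R S : Ω → ℝ) (mR mS : ℝ) (hmR : 0 < mR) (hmS : 0 < mS)
    (hR : Measure.map R μ = expMeasure (1 / mR))
    (hS : Measure.map S μ = expMeasure (1 / mS)) :
    ∫ ω, Real.log (1 + R ω * S ω / (S ω + 1)) ∂μ
      ≥ Real.log (1 + mR * mS * Real.exp (-2 * Real.eulerMascheroniConstant)
          * Real.exp (-(Real.exp (1 / mS) * ∫ t in Set.Ioi (1 / mS), Real.exp (-t) / t))) := by
  have hrR : 0 < 1 / mR := by positivity
  have hrS : 0 < 1 / mS := by positivity
  have hlawR := HasLaw.of_map_eq hR (isProbabilityMeasure_expMeasure hrR).ne_zero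
  have hlawS := HasLaw.of_map_eq hS (isProbabilityMeasure_expMeasure hrS).ne_zero
  have hSNR : (fun ω => log (1 + R ω * S ω / (S ω + 1)))
      =ᵐ[μ] fun ω => log (1 + exp (log (R ω) + log (S ω) - log (1 + S ω))) := by
    filter_upwards [ae_of_ae_map hlawR.aemeasurable (hR ▸ ae_pos_expMeasure _),
      ae_of_ae_map hlawS.aemeasurable (hS ▸ ae_pos_expMeasure _)] with ω hRω hSω
    rw [exp_sub, exp_add, exp_log hRω, exp_log hSω, exp_log (by linarith), add_comm 1 (S ω)]
  rw [ge_iff_le, integral_congr_ae hSNR]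
  convert log_one_add_exp_integral_le
    (integrable_log_add_log_sub_log_one_add hrR hrS hlawR hlawS) using 3
  rw [integral_log_add_log_sub_log_one_add hrR hrS hlawR hlawS, one_div mR, one_div mS, log_inv,
    log_inv, ← one_div]
  simp only [neg_neg, sub_eq_add_neg, exp_add, exp_log hmR, exp_log hmS, neg_mul]

/-- Lower bound `Î₁` of the without-jamming ESSR: for independent exponential `R`, `S`
with means `m_R`, `m_S`,
`E[ln(1 + R·S/(S+1))] ≥ ln(1 + m_R·m_S·exp(-2γ)·exp(-exp(1/m_S)·∫_{1/m_S}^∞ exp(-t)/t dt))`. -/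
theorem lower_bound_I1_without_jamming
    {Ω : Type*} [MeasurableSpace Ω] (μ : Measure Ω) [IsProbabilityMeasure μ]
    (R S : Ω → ℝ) (mR mS : ℝ) (hmR : 0 < mR) (hmS : 0 < mS)
    (hRm : Measurable R) (hSm : Measurable S)
    (hR : Measure.map R μ = expMeasure (1 / mR))
    (hS : Measure.map S μ = expMeasure (1 / mS))
    (hindep : IndepFun R S μ) :
    ∫ ω, Real.log (1 + R ω * S ω / (S ω + 1)) ∂μ
      ≥ Real.log (1 + mR * mS * Real.exp (-2 * Real.eulerMascheroniConstant)
          * Real.exp (-(Real.exp (1 / mS) * ∫ t in Set.Ioi (1 / mS), Real.exp (-t) / t))) :=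
  lower_bound_I1_without_jamming_general μ R S mR mS hmR hmS hR hS
end

section
/- Let X and Y be independent exponentially distributed random variables with means m_x > 0 and m_y > 0, with m_x ≠ m_y. Then E[ln(1 + X + Y)] = (m_x/(m_x − m_y))·exp(1/m_x)·∫_{1/m_x}^∞ (exp(−t)/t) dt − (m_y/(m_x − m_y))·exp(1/m_y)·∫_{1/m_y}^∞ (exp(−t)/t) dt. (Equivalently, E[ln(1 + X + Y)] = (m_x/(m_y − m_x))·exp(1/m_x)·Ei(−1/m_x) + (m_y/(m_x − m_y))·exp(1/m_y)·Ei(−1/m_y), where Ei is the exponential integral.) -/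
/-!
With rates `a = 1 / m_x` and `b = 1 / m_y`, the law of `X + Y` is the convolution of the two
exponential laws, which for `a ≠ b` has the hypoexponential density
`a b / (b - a) · (e^{-a s} - e^{-b s})` on `s ≥ 0`. The expectation therefore splits into two
Laplace transforms of `log (1 + s)`. Integrating by parts,
`∫₀^∞ log (1 + s) e^{-c s} ds = c⁻¹ ∫₀^∞ e^{-c s} / (1 + s) ds`, and the substitution
`t = c (1 + s)` turns this into `c⁻¹ e^c ∫_c^∞ e^{-t} / t dt`.
-/

open MeasureTheory ProbabilityTheory Real Set Filter Topology
open scoped ENNReal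

lemma integrableOn_log_one_add_mul_exp_neg {c : ℝ} (hc : 0 < c) :
    IntegrableOn (fun s => log (1 + s) * exp (-(c * s))) (Ioi 0) := by
  have hdom : IntegrableOn (fun s : ℝ => s ^ (1 : ℝ) * exp (-c * s ^ (1 : ℝ))) (Ioi 0) :=
    integrableOn_rpow_mul_exp_neg_mul_rpow (by norm_num) one_pos hc
  refine hdom.mono' (by fun_prop) ?_
  filter_upwards [ae_restrict_mem measurableSet_Ioi] with s (hs : 0 < s)
  have hlog : log (1 + s) ≤ s := by linarith [log_le_sub_one_of_pos (by linarith : 0 < 1 + s)]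
  rw [rpow_one, neg_mul, norm_mul, norm_of_nonneg (log_nonneg (by linarith)),
    norm_of_nonneg (exp_pos _).le]
  gcongr

lemma integral_log_one_add_mul_exp_neg_eq {c : ℝ} (hc : 0 < c) :
    ∫ s in Ioi 0, log (1 + s) * exp (-(c * s)) =
      c⁻¹ * ∫ s in Ioi 0, exp (-(c * s)) / (1 + s) := by
  set v : ℝ → ℝ := fun s => c⁻¹ * -exp (-(c * s))
  have hu : ∀ s ∈ Ioi (0 : ℝ), HasDerivAt (fun s => log (1 + s)) (1 + s)⁻¹ s := by
    intro s (hs : 0 < s)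
    simpa using ((hasDerivAt_id' s).const_add 1).log (by linarith : 0 < 1 + s).ne'
  have hv : ∀ s ∈ Ioi (0 : ℝ), HasDerivAt v (exp (-(c * s))) s := fun s _ =>
    (hasDerivAt_neg_exp_mul_exp.const_mul c⁻¹).congr_deriv (inv_mul_cancel_left₀ hc.ne' _)
  have huv' : IntegrableOn (fun s => log (1 + s) * exp (-(c * s))) (Ioi 0) :=
    integrableOn_log_one_add_mul_exp_neg hc
  have hu'v : IntegrableOn (fun s => (1 + s)⁻¹ * v s) (Ioi 0) := by
    refine ((exp_neg_integrableOn_Ioi 0 hc).const_mul c⁻¹).mono' (by fun_prop) ?_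
    filter_upwards [ae_restrict_mem measurableSet_Ioi] with s (hs : 0 < s)
    rw [norm_mul, norm_inv, norm_of_nonneg (by linarith : (0 : ℝ) ≤ 1 + s), norm_mul, norm_neg,
      norm_inv, norm_of_nonneg hc.le, norm_of_nonneg (exp_pos _).le, neg_mul]
    exact mul_le_of_le_one_left (by positivity) (inv_le_one_of_one_le₀ (by linarith))
  have h_zero : Tendsto (fun s => log (1 + s) * v s) (𝓝[>] 0) (𝓝 0) := by
    have hcont : ContinuousAt (fun s => log (1 + s) * v s) 0 :=
      ((continuousAt_const.add continuousAt_id).log (by norm_num)).mul (by fun_prop)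
    simpa using hcont.tendsto.mono_left nhdsWithin_le_nhds
  -- A function that is integrable together with its derivative tends to `0` at infinity.
  have h_infty : Tendsto (fun s => log (1 + s) * v s) atTop (𝓝 0) := by
    refine tendsto_zero_of_hasDerivAt_of_integrableOn_Ioi (a := 0)
      (fun s hs => (hu s hs).mul (hv s hs)) (hu'v.add huv') ?_
    simpa [IntegrableOn, v, mul_left_comm] using huv'.const_mul (-c⁻¹)
  rw [integral_Ioi_mul_deriv_eq_deriv_mul hu hv huv' hu'v h_zero h_infty, ← integral_const_mul,
    sub_self, zero_sub, ← integral_neg]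
  refine setIntegral_congr_fun measurableSet_Ioi fun s _ => ?_
  simp only [v]
  ring

lemma integral_exp_neg_mul_div_one_add {c : ℝ} (hc : 0 < c) :
    ∫ s in Ioi 0, exp (-(c * s)) / (1 + s) = exp c * ∫ t in Ioi c, exp (-t) / t := by
  set g : ℝ → ℝ := fun t => exp (-t) / t
  have shift : ∫ s in Ioi 0, g (c * (s + 1)) = ∫ t in Ioi 1, g (c * t) := by
    simpa using (measurePreserving_add_right volume (1 : ℝ)).setIntegral_preimage_emb
      (measurableEmbedding_addRight 1) (fun t => g (c * t)) (Ioi 1)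
  calc ∫ s in Ioi 0, exp (-(c * s)) / (1 + s)
      = ∫ s in Ioi 0, c * exp c * g (c * (s + 1)) := by
        refine setIntegral_congr_fun measurableSet_Ioi fun s (hs : 0 < s) => ?_
        simp only [g]
        rw [show -(c * (s + 1)) = -(c * s) + -c by ring, exp_add, exp_neg c]
        field_simp
        ring
    _ = exp c * ∫ t in Ioi c, g t := by
        rw [integral_const_mul, shift, integral_comp_mul_left_Ioi g 1 hc, mul_one, smul_eq_mul]
        field_simp

lemma integral_log_one_add_mul_exp_neg {c : ℝ} (hc : 0 < c) :
    ∫ s in Ioi 0, log (1 + s) * exp (-(c * s)) =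
      c⁻¹ * exp c * ∫ t in Ioi c, exp (-t) / t := by
  rw [integral_log_one_add_mul_exp_neg_eq hc, integral_exp_neg_mul_div_one_add hc, mul_assoc]

noncomputable def hypoexponentialPDFReal (a b x : ℝ) : ℝ :=
  if 0 ≤ x then a * b / (b - a) * (exp (-(a * x)) - exp (-(b * x))) else 0

lemma measurable_hypoexponentialPDFReal (a b : ℝ) : Measurable (hypoexponentialPDFReal a b) :=
  Measurable.ite measurableSet_Ici (by fun_prop) measurable_const

lemma hypoexponentialPDFReal_nonneg {a b : ℝ} (ha : 0 ≤ a) (hb : 0 ≤ b) (x : ℝ) :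
    0 ≤ hypoexponentialPDFReal a b x := by
  unfold hypoexponentialPDFReal
  split_ifs with hx
  · have hquot : 0 ≤ (exp (-(a * x)) - exp (-(b * x))) / (b - a) := by
      rcases le_total a b with h | h
      · exact div_nonneg (sub_nonneg.2 (exp_le_exp.2 (by nlinarith))) (sub_nonneg.2 h)
      · exact div_nonneg_of_nonpos (sub_nonpos.2 (exp_le_exp.2 (by nlinarith))) (sub_nonpos.2 h)
    calc 0 ≤ a * b * ((exp (-(a * x)) - exp (-(b * x))) / (b - a)) :=
          mul_nonneg (mul_nonneg ha hb) hquot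
      _ = a * b / (b - a) * (exp (-(a * x)) - exp (-(b * x))) := by ring
  · exact le_rfl

lemma lconvolution_exponentialPDF {a b : ℝ} (ha : 0 ≤ a) (hb : 0 ≤ b) (hab : a ≠ b)
    (x : ℝ) :
    (exponentialPDF a ⋆ₗ exponentialPDF b) x =
      ENNReal.ofReal (hypoexponentialPDFReal a b x) := by
  rw [lconvolution_def]
  by_cases hx : 0 ≤ x
  swap
  · rw [hypoexponentialPDFReal, if_neg hx, ENNReal.ofReal_zero]
    refine (lintegral_congr fun y => ?_).trans lintegral_zero
    rcases lt_or_ge y 0 with hy | hy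
    · rw [exponentialPDF_of_neg hy, zero_mul]
    · rw [exponentialPDF_of_neg (by linarith : -y + x < 0), mul_zero]
  have hind : (fun y => exponentialPDF a y * exponentialPDF b (-y + x)) =
      (Icc 0 x).indicator fun y => ENNReal.ofReal (a * b * exp (-(b * x)) * exp ((b - a) * y)) := by
    ext y
    by_cases hy : y ∈ Icc 0 x
    · have hexp : exp (-(a * y)) * exp (-(b * (-y + x))) = exp (-(b * x)) * exp ((b - a) * y) := by
        rw [← exp_add, ← exp_add]; ring_nf
      rw [indicator_of_mem hy, exponentialPDF_of_nonneg hy.1,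
        exponentialPDF_of_nonneg (by linarith [hy.2]), ← ENNReal.ofReal_mul (by positivity)]
      congr 1
      linear_combination (a * b) * hexp
    · rw [indicator_of_notMem hy]
      rcases not_and_or.mp hy with hy | hy
      · rw [exponentialPDF_of_neg (not_le.mp hy), zero_mul]
      · rw [exponentialPDF_of_neg (by linarith [not_le.mp hy] : -y + x < 0), mul_zero]
  rw [hind, lintegral_indicator measurableSet_Icc, ← ofReal_integral_eq_lintegral_ofReal
      ((by fun_prop : Continuous _).integrableOn_Icc) (ae_of_all _ fun y => by positivity),
    integral_Icc_eq_integral_Ioc, ← intervalIntegral.integral_of_le hx,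
    intervalIntegral.integral_const_mul,
    intervalIntegral.integral_comp_mul_left (fun y => exp y) (sub_ne_zero.2 hab.symm),
    integral_exp, hypoexponentialPDFReal, if_pos hx, smul_eq_mul, mul_zero, exp_zero]
  have hexp : exp (-(b * x)) * exp ((b - a) * x) = exp (-(a * x)) := by
    rw [← exp_add]; ring_nf
  congr 1
  rw [← hexp]
  field_simp

lemma expMeasure_conv_expMeasure {a b : ℝ} (ha : 0 ≤ a) (hb : 0 ≤ b) (hab : a ≠ b) :
    expMeasure a ∗ expMeasure b =
      volume.withDensity fun x => ENNReal.ofReal (hypoexponentialPDFReal a b x) := by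
  change volume.withDensity (exponentialPDF a) ∗ volume.withDensity (exponentialPDF b) = _
  rw [conv_withDensity_eq_lconvolution (f := exponentialPDF a) (g := exponentialPDF b)
    (measurable_exponentialPDFReal a).ennreal_ofReal
    (measurable_exponentialPDFReal b).ennreal_ofReal]
  exact congrArg _ (funext (lconvolution_exponentialPDF ha hb hab))

lemma integral_expMeasure_conv_expMeasure {a b : ℝ} (ha : 0 ≤ a) (hb : 0 ≤ b) (hab : a ≠ b)
    (f : ℝ → ℝ) :
    ∫ x, f x ∂(expMeasure a ∗ expMeasure b) =
      ∫ x in Ioi 0, a * b / (b - a) * (exp (-(a * x)) - exp (-(b * x))) * f x := by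
  rw [expMeasure_conv_expMeasure ha hb hab, integral_withDensity_eq_integral_toReal_smul
      (measurable_hypoexponentialPDFReal a b).ennreal_ofReal
      (ae_of_all _ fun _ => ENNReal.ofReal_lt_top),
    ← integral_Ici_eq_integral_Ioi, ← integral_indicator measurableSet_Ici]
  congr 1
  ext x
  rw [ENNReal.toReal_ofReal (hypoexponentialPDFReal_nonneg ha hb x), smul_eq_mul,
    hypoexponentialPDFReal]
  by_cases hx : 0 ≤ x <;> simp [hx]

lemma integral_log_one_add_expMeasure_conv_expMeasure {a b : ℝ} (ha : 0 < a) (hb : 0 < b)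
    (hab : a ≠ b) :
    ∫ x, log (1 + x) ∂(expMeasure a ∗ expMeasure b) =
      b / (b - a) * exp a * (∫ t in Ioi a, exp (-t) / t)
        - a / (b - a) * exp b * (∫ t in Ioi b, exp (-t) / t) := by
  calc ∫ x, log (1 + x) ∂(expMeasure a ∗ expMeasure b)
      = a * b / (b - a) * ((∫ s in Ioi 0, log (1 + s) * exp (-(a * s)))
          - ∫ s in Ioi 0, log (1 + s) * exp (-(b * s))) := by
        rw [integral_expMeasure_conv_expMeasure ha.le hb.le hab, ← integral_sub
          (integrableOn_log_one_add_mul_exp_neg ha) (integrableOn_log_one_add_mul_exp_neg hb),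
          ← integral_const_mul]
        congr 1
        ext s
        ring
    _ = _ := by
        rw [integral_log_one_add_mul_exp_neg ha, integral_log_one_add_mul_exp_neg hb]
        field_simp

/-- The term `I₃` in the without-jamming ESSR: for independent exponential `X`, `Y` with
means `m_x ≠ m_y`,
`E[ln(1 + X + Y)] = (m_x/(m_x-m_y))·exp(1/m_x)·∫_{1/m_x}^∞ exp(-t)/t dt
                  - (m_y/(m_x-m_y))·exp(1/m_y)·∫_{1/m_y}^∞ exp(-t)/t dt`. -/
theorem expectation_log_one_add_sum_exponentials
    {Ω : Type*} [MeasurableSpace Ω] (μ : Measure Ω) [IsProbabilityMeasure μ]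
    (X Y : Ω → ℝ) (mx my : ℝ) (hmx : 0 < mx) (hmy : 0 < my) (hne : mx ≠ my)
    (hXm : Measurable X) (hYm : Measurable Y)
    (hX : Measure.map X μ = expMeasure (1 / mx))
    (hY : Measure.map Y μ = expMeasure (1 / my))
    (hindep : IndepFun X Y μ) :
    ∫ ω, Real.log (1 + X ω + Y ω) ∂μ
      = mx / (mx - my) * Real.exp (1 / mx) * (∫ t in Set.Ioi (1 / mx), Real.exp (-t) / t)
        - my / (mx - my) * Real.exp (1 / my) * (∫ t in Set.Ioi (1 / my), Real.exp (-t) / t) := by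
  have hmap : μ.map (X + Y) = expMeasure (1 / mx) ∗ expMeasure (1 / my) := by
    rw [hindep.map_add_eq_map_conv_map hXm hYm, hX, hY]
  have hrates : 1 / mx ≠ 1 / my := by rwa [Ne, one_div, one_div, inv_inj]
  calc ∫ ω, log (1 + X ω + Y ω) ∂μ = ∫ x, log (1 + x) ∂(μ.map (X + Y)) := by
        have hlog : Measurable fun x : ℝ => log (1 + x) := by fun_prop
        rw [integral_map (hXm.add hYm).aemeasurable hlog.aestronglyMeasurable]
        simp only [Pi.add_apply, add_assoc]
    _ = _ := by
        rw [hmap, integral_log_one_add_expMeasure_conv_expMeasure (by positivity) (by positivity)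
          hrates]
        field_simp
end

section
/- Let p > 0 and let k ≥ 1 be an integer. Then ∫₀^∞ u^{2k−1}·exp(−p·u)/(u² + 1) du = (−1)^k·( ci(p)·cos(p) + si(p)·sin(p) ) + Σ_{j=1}^{k−1} (2k − 2j − 1)!·(−1)^{j−1}·p^{2j−2k}, where ci(p) = −∫_p^∞ (cos t)/t dt and si(p) = −∫_p^∞ (sin t)/t dt (the sum is empty for k = 1). -/
open MeasureTheory Real Filter

/-!
Write `I n = ∫₀^∞ uⁿ e^{-pu}/(u²+1) du`. Since `u^{n+2}/(u²+1) = uⁿ - uⁿ/(u²+1)`, the Gamma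
integral gives `I n + I (n+2) = n!/p^{n+1}`, and unwinding this recurrence from `I 1` produces the
alternating sum. For `I 1`, the Laplace transform `e^{-pu}/(u²+1) = ∫_p^∞ sin(t-p) e^{-tu} dt` and
Fubini (absolutely convergent thanks to the extra factor `u`) turn it into `∫_p^∞ sin(t-p)/t² dt`;
an integration by parts makes this `∫_p^∞ cos(t-p)/t dt`, and expanding `cos(t-p)` gives
`-(ci(p) cos p + si(p) sin p)`.
-/

open Set
open scoped Nat Topology

variable {p : ℝ}

lemma eq_alternating_sum_of_add_eq {R : Type*} [CommRing R] {a c : ℕ → R}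
    (h : ∀ n, a n + a (n + 1) = c n) (n : ℕ) :
    a n = (-1) ^ n * a 0 + ∑ j ∈ Finset.Icc 1 n, (-1) ^ (j - 1) * c (n - j) := by
  have shift (m : ℕ) (f : ℕ → R) :
      ∑ j ∈ Finset.Icc 1 m, f j = ∑ i ∈ Finset.range m, f (i + 1) := by
    rw [← Finset.Ico_add_one_right_eq_Icc, Finset.sum_Ico_eq_sum_range]
    simp [add_comm]
  induction n with
  | zero => simp
  | succ n ih =>
    rw [shift] at ih ⊢
    simp only [Nat.add_sub_cancel, Nat.add_sub_add_right] at ih ⊢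
    rw [Finset.sum_range_succ']
    simp only [pow_succ, Finset.sum_neg_distrib, neg_mul, mul_neg, mul_one, pow_zero, one_mul,
      Nat.sub_zero]
    linear_combination h n - ih

lemma integrableOn_pow_mul_exp_neg_mul (hp : 0 < p) (n : ℕ) :
    IntegrableOn (fun u : ℝ => u ^ n * exp (-p * u)) (Ioi 0) := by
  refine (integrableOn_rpow_mul_exp_neg_mul_rpow (s := n) (p := 1)
    (neg_one_lt_zero.trans_le n.cast_nonneg) one_pos hp
    |>.congr_fun (fun u _ => ?_) measurableSet_Ioi)
  simp

lemma integral_pow_mul_exp_neg_mul (hp : 0 < p) (n : ℕ) :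
    ∫ u in Ioi (0 : ℝ), u ^ n * exp (-p * u) = n ! / p ^ (n + 1) := by
  have h := integral_rpow_mul_exp_neg_mul_Ioi (a := n + 1) (by positivity) hp
  rw [Gamma_nat_eq_factorial, add_sub_cancel_right, ← Nat.cast_succ, rpow_natCast] at h
  simpa [neg_mul, div_eq_inv_mul] using h

lemma integrableOn_pow_mul_exp_neg_mul_div_sq_add_one (hp : 0 < p) (n : ℕ) :
    IntegrableOn (fun u : ℝ => u ^ n * exp (-p * u) / (u ^ 2 + 1)) (Ioi 0) := by
  refine (integrableOn_pow_mul_exp_neg_mul hp n).mono'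
    (Measurable.aestronglyMeasurable (by fun_prop)) ?_
  filter_upwards [ae_restrict_mem measurableSet_Ioi] with u (hu : 0 < u)
  rw [norm_of_nonneg (by positivity)]
  exact div_le_self (by positivity) (by nlinarith)

lemma integral_pow_add_two_mul_exp_neg_mul_div_sq_add_one (hp : 0 < p) (n : ℕ) :
    ∫ u in Ioi (0 : ℝ), u ^ (n + 2) * exp (-p * u) / (u ^ 2 + 1)
      = n ! / p ^ (n + 1) - ∫ u in Ioi (0 : ℝ), u ^ n * exp (-p * u) / (u ^ 2 + 1) := by
  rw [← integral_pow_mul_exp_neg_mul hp n, ← integral_sub (integrableOn_pow_mul_exp_neg_mul hp n)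
    (integrableOn_pow_mul_exp_neg_mul_div_sq_add_one hp n)]
  congr 1 with u
  field_simp
  ring

lemma integral_Ioi_sin_sub_mul_exp_neg_mul (p : ℝ) {u : ℝ} (hu : 0 < u) :
    ∫ t in Ioi p, sin (t - p) * exp (-t * u) = exp (-p * u) / (u ^ 2 + 1) := by
  set F : ℝ → ℝ := fun t => -exp (-t * u) * (u * sin (t - p) + cos (t - p)) / (u ^ 2 + 1)
  have hF : ∀ t ∈ Ici p, HasDerivAt F (sin (t - p) * exp (-t * u)) t := by
    intro t _
    have hexp : HasDerivAt (fun t => exp (-t * u)) (exp (-t * u) * -u) t := by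
      simpa using ((hasDerivAt_neg t).mul_const u).exp
    have hsin : HasDerivAt (fun t => sin (t - p)) (cos (t - p)) t := by
      simpa using ((hasDerivAt_id t).sub_const p).sin
    have hcos : HasDerivAt (fun t => cos (t - p)) (-sin (t - p)) t := by
      simpa using ((hasDerivAt_id t).sub_const p).cos
    refine ((hexp.neg.mul ((hsin.const_mul u).add hcos)).div_const (u ^ 2 + 1)).congr_deriv ?_
    rw [div_eq_iff (by positivity)]
    simp only [Pi.add_apply, Pi.neg_apply]
    ring
  have hint : IntegrableOn (fun t => sin (t - p) * exp (-t * u)) (Ioi p) := by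
    have h : IntegrableOn (fun t => sin (t - p) * exp (-u * t)) (Ioi p) :=
      (exp_neg_integrableOn_Ioi p hu).bdd_mul (c := 1) (by fun_prop)
        (ae_of_all _ fun t => by simpa using abs_sin_le_one (t - p))
    simpa only [mul_comm u, neg_mul] using h
  have hlim : Tendsto F atTop (𝓝 0) := by
    have hexp : Tendsto (fun t => exp (-t * u)) atTop (𝓝 0) :=
      tendsto_exp_atBot.comp (tendsto_neg_atTop_atBot.atBot_mul_const hu)
    have hbdd : IsBoundedUnder (· ≤ ·) atTop fun t => ‖u * sin (t - p) + cos (t - p)‖ := by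
      refine isBoundedUnder_of ⟨u + 1, fun t => (norm_add_le _ _).trans ?_⟩
      rw [norm_mul, norm_of_nonneg hu.le, norm_eq_abs, norm_eq_abs]
      gcongr
      · exact mul_le_of_le_one_right hu.le (abs_sin_le_one _)
      · exact abs_cos_le_one _
    simpa [F] using ((hexp.zero_mul_isBoundedUnder_le hbdd).neg.div_const (u ^ 2 + 1))
  rw [integral_Ioi_of_hasDerivAt_of_tendsto' hF hint hlim]
  simp [F, neg_div]

lemma integrableOn_Ioi_inv_sq (hp : 0 < p) : IntegrableOn (fun t : ℝ => (t ^ 2)⁻¹) (Ioi p) := by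
  refine (integrableOn_Ioi_rpow_of_lt (by norm_num : (-2 : ℝ) < -1) hp).congr_fun
    (fun t (ht : p < t) => ?_) measurableSet_Ioi
  dsimp only
  rw [rpow_neg (hp.trans ht).le, rpow_two]

lemma integral_Ioi_sin_sub_div_sq (hp : 0 < p) :
    ∫ t in Ioi p, sin (t - p) / t ^ 2 = ∫ u in Ioi (0 : ℝ), u * exp (-p * u) / (u ^ 2 + 1) := by
  have hkernel : ∀ t ∈ Ioi p, ∫ u in Ioi (0 : ℝ), u * exp (-t * u) = (t ^ 2)⁻¹ := fun t ht => by
    simpa using integral_pow_mul_exp_neg_mul (hp.trans ht) 1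
  have hG : Integrable (fun z : ℝ × ℝ => z.2 * exp (-z.1 * z.2))
      ((volume.restrict (Ioi p)).prod (volume.restrict (Ioi 0))) := by
    rw [integrable_prod_iff (by fun_prop)]
    refine ⟨(ae_restrict_iff' measurableSet_Ioi).2 (ae_of_all _ fun t ht => ?_), ?_⟩
    · simpa [IntegrableOn] using integrableOn_pow_mul_exp_neg_mul (hp.trans ht) 1
    · refine (integrableOn_Ioi_inv_sq hp).congr_fun (fun t ht => ?_) measurableSet_Ioi
      dsimp only
      rw [← hkernel t ht]
      refine setIntegral_congr_fun measurableSet_Ioi fun u (hu : 0 < u) => ?_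
      simp only [norm_of_nonneg (mul_nonneg hu.le (exp_pos _).le)]
  have hF : Integrable (Function.uncurry fun t u => sin (t - p) * (u * exp (-t * u)))
      ((volume.restrict (Ioi p)).prod (volume.restrict (Ioi 0))) :=
    hG.bdd_mul (c := 1) (by fun_prop) (ae_of_all _ fun z => by simpa using abs_sin_le_one _)
  calc ∫ t in Ioi p, sin (t - p) / t ^ 2
      = ∫ t in Ioi p, ∫ u in Ioi (0 : ℝ), sin (t - p) * (u * exp (-t * u)) :=
        setIntegral_congr_fun measurableSet_Ioi fun t ht => by
          rw [integral_const_mul, hkernel t ht, div_eq_mul_inv]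
    _ = ∫ u in Ioi (0 : ℝ), ∫ t in Ioi p, sin (t - p) * (u * exp (-t * u)) :=
        integral_integral_swap hF
    _ = ∫ u in Ioi (0 : ℝ), u * exp (-p * u) / (u ^ 2 + 1) :=
        setIntegral_congr_fun measurableSet_Ioi fun u hu => by
          simp_rw [mul_left_comm (sin _) u]
          rw [integral_const_mul, integral_Ioi_sin_sub_mul_exp_neg_mul p hu, mul_div_assoc]

lemma intervalIntegrable_div_pow {f : ℝ → ℝ} (hf : Continuous f) (n : ℕ) (hp : 0 < p) {b : ℝ}
    (hb : p ≤ b) : IntervalIntegrable (fun t => f t / t ^ n) volume p b := by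
  refine (hf.continuousOn.div (continuous_pow n).continuousOn fun t ht => ?_).intervalIntegrable
  rw [uIcc_of_le hb] at ht
  exact pow_ne_zero n (hp.trans_le ht.1).ne'

lemma tendsto_integral_cos_sub_div (hp : 0 < p) :
    Tendsto (fun b => ∫ t in p..b, cos (t - p) / t) atTop
      (𝓝 (∫ t in Ioi p, sin (t - p) / t ^ 2)) := by
  have hparts : ∀ b ≥ p, ∫ t in p..b, cos (t - p) / t
      = sin (b - p) / b + ∫ t in p..b, sin (t - p) / t ^ 2 := fun b hb => by
    have hderiv : ∀ t ∈ uIcc p b, HasDerivAt (fun t => sin (t - p) / t)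
        (cos (t - p) / t - sin (t - p) / t ^ 2) t := fun t ht => by
      rw [uIcc_of_le hb] at ht
      have ht0 : t ≠ 0 := (hp.trans_le ht.1).ne'
      refine ((((hasDerivAt_id t).sub_const p).sin).div (hasDerivAt_id t) ht0).congr_deriv ?_
      field_simp
      exact mul_div_cancel_right₀ _ (pow_ne_zero 2 ht0)
    have hcos := intervalIntegrable_div_pow (continuous_cos.comp (continuous_sub_right p)) 1 hp hb
    have hsin := intervalIntegrable_div_pow (continuous_sin.comp (continuous_sub_right p)) 2 hp hb
    simp only [pow_one, Function.comp_def] at hcos hsin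
    have := intervalIntegral.integral_eq_sub_of_hasDerivAt hderiv (hcos.sub hsin)
    rw [intervalIntegral.integral_sub hcos hsin, sub_self, sin_zero, zero_div, sub_zero] at this
    linarith
  have hboundary : Tendsto (fun b => sin (b - p) / b) atTop (𝓝 0) := by
    simpa only [div_eq_mul_inv] using isBoundedUnder_le_mul_tendsto_zero
      (isBoundedUnder_of ⟨1, fun b => by simpa using abs_sin_le_one (b - p)⟩)
      tendsto_inv_atTop_zero
  have hint : IntegrableOn (fun t => sin (t - p) / t ^ 2) (Ioi p) := by
    simp only [div_eq_mul_inv]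
    exact (integrableOn_Ioi_inv_sq hp).bdd_mul (c := 1) (by fun_prop)
      (ae_of_all _ fun t => by simpa using abs_sin_le_one _)
  simpa using (hboundary.add (intervalIntegral_tendsto_integral_Ioi p hint tendsto_id)).congr'
    ((eventually_ge_atTop p).mono fun b hb => (hparts b hb).symm)

lemma tendsto_integral_cos_sub_div_of_tendsto (hp : 0 < p) {ci si : ℝ}
    (hci : Tendsto (fun b => ∫ t in p..b, cos t / t) atTop (𝓝 (-ci)))
    (hsi : Tendsto (fun b => ∫ t in p..b, sin t / t) atTop (𝓝 (-si))) :
    Tendsto (fun b => ∫ t in p..b, cos (t - p) / t) atTop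
      (𝓝 (-(ci * cos p + si * sin p))) := by
  have hsplit :
      (fun t => cos (t - p) / t) = fun t => cos p * (cos t / t) + sin p * (sin t / t) := by
    ext t
    rw [cos_sub]
    ring
  have hlim := (hci.const_mul (cos p)).add (hsi.const_mul (sin p))
  rw [show cos p * -ci + sin p * -si = -(ci * cos p + si * sin p) by ring] at hlim
  refine hlim.congr' ((eventually_ge_atTop p).mono fun b hb => ?_)
  have hcos := intervalIntegrable_div_pow continuous_cos 1 hp hb
  have hsin := intervalIntegrable_div_pow continuous_sin 1 hp hb
  simp only [pow_one] at hcos hsin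
  dsimp only
  rw [hsplit, intervalIntegral.integral_add (hcos.const_mul _) (hsin.const_mul _),
    intervalIntegral.integral_const_mul, intervalIntegral.integral_const_mul]

lemma integral_mul_exp_neg_mul_div_sq_add_one (hp : 0 < p) {ci si : ℝ}
    (hci : Tendsto (fun b => ∫ t in p..b, cos t / t) atTop (𝓝 (-ci)))
    (hsi : Tendsto (fun b => ∫ t in p..b, sin t / t) atTop (𝓝 (-si))) :
    ∫ u in Ioi (0 : ℝ), u * exp (-p * u) / (u ^ 2 + 1) = -(ci * cos p + si * sin p) := by
  rw [← integral_Ioi_sin_sub_div_sq hp]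
  exact tendsto_nhds_unique (tendsto_integral_cos_sub_div hp)
    (tendsto_integral_cos_sub_div_of_tendsto hp hci hsi)

/-- Closed form for `∫₀^∞ u^{2k-1}·exp(-p·u)/(u²+1) du` in terms of the cosine and sine
integrals `ci(p) = -∫_p^∞ (cos t)/t dt` and `si(p) = -∫_p^∞ (sin t)/t dt` (given as limits
of proper integrals since these improper integrals converge only conditionally):
`∫₀^∞ u^{2k-1}·exp(-p·u)/(u²+1) du
  = (-1)^k·(ci(p)·cos p + si(p)·sin p) + ∑_{j=1}^{k-1} (2k-2j-1)!·(-1)^{j-1}·p^{2j-2k}`. -/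
theorem integral_odd_power_exp_div_sq_add_one
    (p : ℝ) (hp : 0 < p) (k : ℕ) (hk : 1 ≤ k) (ci si : ℝ)
    (hci : Tendsto (fun b => ∫ t in p..b, Real.cos t / t) atTop (nhds (-ci)))
    (hsi : Tendsto (fun b => ∫ t in p..b, Real.sin t / t) atTop (nhds (-si))) :
    ∫ u in Set.Ioi (0 : ℝ), u ^ (2 * k - 1) * Real.exp (-p * u) / (u ^ 2 + 1)
      = (-1 : ℝ) ^ k * (ci * Real.cos p + si * Real.sin p)
        + ∑ j ∈ Finset.Icc 1 (k - 1),
            (Nat.factorial (2 * k - 2 * j - 1) : ℝ) * (-1 : ℝ) ^ (j - 1)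
              * p ^ (2 * (j : ℤ) - 2 * (k : ℤ)) := by
  obtain ⟨n, rfl⟩ : ∃ n, k = n + 1 := ⟨k - 1, by omega⟩
  set I : ℕ → ℝ := fun m => ∫ u in Ioi (0 : ℝ), u ^ (2 * m + 1) * exp (-p * u) / (u ^ 2 + 1)
  have hrec (m : ℕ) : I m + I (m + 1) = (2 * m + 1)! / p ^ (2 * m + 1 + 1) := by
    simp only [I, show 2 * (m + 1) + 1 = 2 * m + 1 + 2 by ring,
      integral_pow_add_two_mul_exp_neg_mul_div_sq_add_one hp]
    ring
  have hI0 : I 0 = -(ci * cos p + si * sin p) := by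
    simpa [I] using integral_mul_exp_neg_mul_div_sq_add_one hp hci hsi
  rw [show 2 * (n + 1) - 1 = 2 * n + 1 by omega, Nat.add_sub_cancel]
  change I n = _
  rw [eq_alternating_sum_of_add_eq hrec n, hI0, pow_succ]
  congr 1
  · ring
  refine Finset.sum_congr rfl fun j hj => ?_
  have hjn := (Finset.mem_Icc.mp hj).2
  have hexponent : 2 * (j : ℤ) - 2 * ((n + 1 : ℕ) : ℤ) = -((2 * (n - j) + 1 + 1 : ℕ) : ℤ) := by
    push_cast [Nat.cast_sub hjn]
    ring
  rw [hexponent, zpow_neg, zpow_natCast, show 2 * (n + 1) - 2 * j - 1 = 2 * (n - j) + 1 by omega]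
  ring
end
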